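/- arXiv:1408.1283 — 5 statements merged into one kernel-verified Lean document; each statement's English description precedes it below -/
import Mathlib

section
/- The characteristic polynomial of the graph S_{n,n+3} (the star on n vertices with 4 additional edges all joining pairs of leaves adjacent to one common leaf, i.e., the star S_n plus e−n+1 = 4 extra edges all connected to the same vertex) is x^n − (n+3)x^{n−2} − 8x^{n−3} + (4n−24)x^{n−4}. -/
open Polynomial MeasureTheory

/-- The adjacency matrix of a simple graph over `ℝ` is Hermitian. -/
lemma adjHerm {V : Type*} [Fintype V] (G : SimpleGraph V) [DecidableRel G.Adj] :
    (SimpleGraph.adjMatrix ℝ G).IsHermitian := by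
  ext i j
  simp [Matrix.conjTranspose_apply, SimpleGraph.adj_comm]

/-- The energy of a graph: sum of absolute values of adjacency eigenvalues. -/
noncomputable def energy {V : Type*} [Fintype V] [DecidableEq V] (G : SimpleGraph V)
    [DecidableRel G.Adj] : ℝ :=
  ∑ i, |(adjHerm G).eigenvalues i|

/-- `SnE n k` is the graph `S_{n, n-1+k}`: the star on `n` vertices with center `0`,
plus `k` extra edges joining the fixed leaf `1` to the leaves `2, …, k+1`. -/
def SnE (n k : ℕ) : SimpleGraph (Fin n) where
  Adj v w := v ≠ w ∧ (v.val = 0 ∨ w.val = 0 ∨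
    (v.val = 1 ∧ 2 ≤ w.val ∧ w.val ≤ k + 1) ∨ (w.val = 1 ∧ 2 ≤ v.val ∧ v.val ≤ k + 1))
  symm := by constructor; intro v w h; exact ⟨h.1.symm, by tauto⟩
  loopless := by constructor; intro v h; exact h.1 rfl

instance {n k : ℕ} : DecidableRel (SnE n k).Adj := fun v w => by
  unfold SnE; exact inferInstanceAs (Decidable (_ ∧ _))

instance {α β : Type*} (G : SimpleGraph α) (H : SimpleGraph β) [DecidableRel G.Adj]
    [DecidableRel H.Adj] : DecidableRel (G ⊕g H).Adj := fun u v =>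
  match u, v with
  | Sum.inl a, Sum.inl b => decidable_of_iff (G.Adj a b) (by simp [SimpleGraph.sum])
  | Sum.inr a, Sum.inr b => decidable_of_iff (H.Adj a b) (by simp [SimpleGraph.sum])
  | Sum.inl _, Sum.inr _ => .isFalse (by simp [SimpleGraph.sum])
  | Sum.inr _, Sum.inl _ => .isFalse (by simp [SimpleGraph.sum])

/-!
The adjacency matrix of `SnE n k` is constant on the blocks of the vertex partition
{centre}, {hub leaf}, {the `k` leaves joined to the hub}, {remaining leaves}, so it is
`P B Pᵀ` for the `n × 4` block-incidence matrix `P` and the `4 × 4` block pattern `B`.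
Sylvester's identity `charpoly (P M) = X ^ (n - 4) * charpoly (M P)` reduces the problem to
`B (Pᵀ P)`, where `Pᵀ P = diag (1, 1, k, n - 2 - k)` holds the block sizes, leaving a
`4 × 4` determinant.
-/

open Matrix Finset

namespace Matrix

variable {V ι R : Type*} [DecidableEq ι] [CommRing R]

theorem submatrix_eq_mul_mul_transpose [Fintype ι] (B : Matrix ι ι R) (π : V → ι) :
    B.submatrix π π =
      (1 : Matrix ι ι R).submatrix π id * (B * ((1 : Matrix ι ι R).submatrix π id)ᵀ) := by
  ext v w
  simp [mul_apply, one_apply]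

theorem transpose_mul_one_submatrix [Fintype V] (π : V → ι) :
    ((1 : Matrix ι ι R).submatrix π id)ᵀ * (1 : Matrix ι ι R).submatrix π id =
      diagonal fun a => (#{v | π v = a} : R) := by
  ext a b
  simp only [mul_apply, transpose_apply, submatrix_apply, id, one_apply, diagonal_apply,
    mul_boole, ← ite_and]
  by_cases h : a = b
  · simp [h, Finset.sum_boole]
  · rw [if_neg h]
    exact Finset.sum_eq_zero fun v _ => if_neg fun hv => h (hv.2.symm.trans hv.1)

theorem charpoly_submatrix [Fintype ι] [Fintype V] [DecidableEq V] (B : Matrix ι ι R) (π : V → ι)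
    (h : Fintype.card ι ≤ Fintype.card V) :
    (B.submatrix π π).charpoly = X ^ (Fintype.card V - Fintype.card ι) *
      (B * diagonal fun a => (#{v | π v = a} : R)).charpoly := by
  rw [submatrix_eq_mul_mul_transpose, charpoly_mul_comm_of_le _ _ h, Matrix.mul_assoc,
    transpose_mul_one_submatrix]

end Matrix

theorem Fin.card_filter_val {n : ℕ} (p : ℕ → Prop) [DecidablePred p] :
    #{i : Fin n | p i} = #{m ∈ range n | p m} := by
  rw [← Finset.image_fin_univ, filter_image, card_image_of_injective _ Fin.val_injective]

namespace SnE

def block (k m : ℕ) : Fin 4 :=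
  if m = 0 then 0 else if m = 1 then 1 else if m ≤ k + 1 then 2 else 3

def quotientAdj : Matrix (Fin 4) (Fin 4) ℝ :=
  !![0, 1, 1, 1; 1, 0, 1, 0; 1, 1, 0, 0; 1, 0, 0, 0]

theorem adjMatrix_eq_submatrix (n k : ℕ) :
    (SnE n k).adjMatrix ℝ =
      quotientAdj.submatrix (fun v : Fin n => block k v) (fun v : Fin n => block k v) := by
  ext v w
  simp only [SimpleGraph.adjMatrix_apply, SnE, submatrix_apply, block, ne_eq, Fin.ext_iff]
  split_ifs <;> simp [quotientAdj] <;> omega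

theorem card_block (n k : ℕ) (hk : k + 2 ≤ n) (a : Fin 4) :
    #{v : Fin n | block k v = a} = ![1, 1, k, n - (k + 2)] a := by
  have h0 : {m ∈ range n | block k m = 0} = {0} := by
    ext m; simp only [mem_filter, mem_range, mem_singleton]; unfold block
    split_ifs <;> simp <;> omega
  have h1 : {m ∈ range n | block k m = 1} = {1} := by
    ext m; simp only [mem_filter, mem_range, mem_singleton]; unfold block
    split_ifs <;> simp <;> omega
  have h2 : {m ∈ range n | block k m = 2} = Icc 2 (k + 1) := by
    ext m; simp only [mem_filter, mem_range, mem_Icc]; unfold block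
    split_ifs <;> simp <;> omega
  have h3 : {m ∈ range n | block k m = 3} = Ico (k + 2) n := by
    ext m; simp only [mem_filter, mem_range, mem_Ico]; unfold block
    split_ifs <;> simp <;> omega
  rw [Fin.card_filter_val (block k · = a)]
  fin_cases a <;> simp [h0, h1, h2, h3]

theorem charpoly_quotientAdj_mul_diagonal (k m : ℝ) :
    (quotientAdj * diagonal ![1, 1, k, m]).charpoly =
      X ^ 4 - C (2 * k + m + 1) * X ^ 2 - C (2 * k) * X + C (k * m) := by
  have hprod : quotientAdj * diagonal ![1, 1, k, m] =
      !![0, 1, k, m; 1, 0, k, 0; 1, 1, 0, 0; 1, 0, 0, 0] := by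
    ext i j; fin_cases i <;> fin_cases j <;> simp [quotientAdj]
  rw [hprod, charpoly, det_succ_row_zero]
  simp [Fin.sum_univ_succ, det_fin_three, charmatrix_apply, submatrix_apply, Fin.succAbove, C_ofNat]
  ring

theorem charpoly_adjMatrix (n k : ℕ) (hn : 4 ≤ n) (hk : k + 2 ≤ n) :
    ((SnE n k).adjMatrix ℝ).charpoly = X ^ (n - 4) *
      (X ^ 4 - C ((n : ℝ) - 1 + k) * X ^ 2 - C (2 * k : ℝ) * X + C (k * ((n : ℝ) - 2 - k))) := by
  have hsize : ((n - (k + 2) : ℕ) : ℝ) = n - 2 - k := by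
    rw [Nat.cast_sub hk]; push_cast; ring
  have hcard : (fun a => (#{v : Fin n | block k v = a} : ℝ)) =
      (![1, 1, k, (n : ℝ) - 2 - k] : Fin 4 → ℝ) := by
    ext a
    rw [card_block n k hk]
    fin_cases a <;> simp [hsize]
  rw [adjMatrix_eq_submatrix, Matrix.charpoly_submatrix _ _ (by simpa using hn), hcard,
    charpoly_quotientAdj_mul_diagonal, Fintype.card_fin, Fintype.card_fin,
    show (2 : ℝ) * k + (n - 2 - k) + 1 = n - 1 + k by ring]

end SnE

/-- The characteristic polynomial of `S_{n,n+3}` is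
`x^n - (n+3)x^{n-2} - 8x^{n-3} + (4n-24)x^{n-4}`. -/
theorem charpoly_S_n_nplus3 (n : ℕ) (hn : 6 ≤ n) :
    (SimpleGraph.adjMatrix ℝ (SnE n 4)).charpoly =
      X ^ n - C ((n : ℝ) + 3) * X ^ (n - 2) - C (8 : ℝ) * X ^ (n - 3)
        + C (4 * (n : ℝ) - 24) * X ^ (n - 4) := by
  rw [SnE.charpoly_adjMatrix n 4 (by omega) (by omega)]
  obtain ⟨m, rfl⟩ : ∃ m, n = m + 6 := ⟨n - 6, by omega⟩
  simp only [show m + 6 - 2 = m + 4 by omega, show m + 6 - 3 = m + 3 by omega,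
    show m + 6 - 4 = m + 2 by omega, map_add, map_sub, map_mul, map_natCast, map_ofNat, map_one]
  ring
end

section
/- The characteristic polynomial of S_{n,n} is x^n − n x^{n−2} − 2x^{n−3} + (n−3)x^{n−4}. -/
open Polynomial MeasureTheory

/-!
The adjacency matrix of `S_{n,n}` has rank at most 4: it is `B * C`, where the columns of `B` are
the indicators of `{0}`, its complement, `{1}` and `{2}`, and the rows of `C` those of the
complement of `{0}`, `{0}`, `{2}` and `{1}` (edges leaving the centre, entering it, and the two
directions of the extra edge). Hence `χ(B * C) = X ^ (n - 4) * χ(C * B)`, and `C * B` is an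
explicit `4 × 4` matrix whose characteristic polynomial is `X⁴ - n X² - 2 X + (n - 3)`.
-/

open Matrix

section Factorization

variable (R : Type*)

def snEOneLeft [Zero R] [One R] (n : ℕ) : Matrix (Fin n) (Fin 4) R :=
  of fun i => ![if i.val = 0 then 1 else 0, if i.val = 0 then 0 else 1,
    if i.val = 1 then 1 else 0, if i.val = 2 then 1 else 0]

def snEOneRight [Zero R] [One R] (n : ℕ) : Matrix (Fin 4) (Fin n) R :=
  of fun k j => ![if j.val = 0 then 0 else 1, if j.val = 0 then 1 else 0,
    if j.val = 2 then 1 else 0, if j.val = 1 then 1 else 0] k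

theorem adjMatrix_snE_one_eq_mul [NonAssocSemiring R] (n : ℕ) :
    (SnE n 1).adjMatrix R = snEOneLeft R n * snEOneRight R n := by
  ext i j
  simp only [SimpleGraph.adjMatrix_apply, SnE, snEOneLeft, snEOneRight, mul_apply,
    Fin.sum_univ_four, of_apply, Fin.ne_iff_vne]
  split_ifs <;> simp_all <;> omega

theorem snEOneRight_mul_snEOneLeft [Ring R] {n : ℕ} (hn : 3 ≤ n) :
    snEOneRight R n * snEOneLeft R n =
      !![0, (n : R) - 1, 1, 1; 1, 0, 0, 0; 0, 1, 0, 1; 0, 1, 1, 0] := by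
  obtain ⟨m, rfl⟩ : ∃ m, n = m + 3 := ⟨n - 3, by omega⟩
  ext k l
  rw [mul_apply]
  simp only [snEOneLeft, snEOneRight, of_apply]
  fin_cases k <;> fin_cases l <;>
    simp [Finset.sum_fin_eq_sum_range, Finset.sum_range_succ', Finset.filter_true_of_mem]
  norm_num [add_sub_assoc]

end Factorization

theorem charpoly_snE_one_quotient {R : Type*} [CommRing R] (a : R) :
    (!![0, a, 1, 1; 1, 0, 0, 0; 0, 1, 0, 1; 0, 1, 1, 0] : Matrix (Fin 4) (Fin 4) R).charpoly =
      X ^ 4 - (C a + 1) * X ^ 2 - 2 * X + (C a - 2) := by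
  rw [charpoly, det_succ_row_zero]
  simp [Fin.sum_univ_succ, det_fin_three, charmatrix_apply, Fin.succAbove]
  ring

/-- The characteristic polynomial of `S_{n,n}` is
`x^n - n x^{n-2} - 2x^{n-3} + (n-3)x^{n-4}`. -/
theorem charpoly_S_n_n (n : ℕ) (hn : 4 ≤ n) :
    (SimpleGraph.adjMatrix ℝ (SnE n 1)).charpoly =
      X ^ n - C ((n : ℝ)) * X ^ (n - 2) - C (2 : ℝ) * X ^ (n - 3)
        + C ((n : ℝ) - 3) * X ^ (n - 4) := by
  rw [adjMatrix_snE_one_eq_mul, charpoly_mul_comm_of_le _ _ (by simpa using hn),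
    snEOneRight_mul_snEOneLeft ℝ (by omega), charpoly_snE_one_quotient, Fintype.card_fin,
    Fintype.card_fin]
  obtain ⟨m, rfl⟩ : ∃ m, n = m + 4 := ⟨n - 4, by omega⟩
  rw [show m + 4 - 2 = m + 2 by omega, show m + 4 - 3 = m + 1 by omega, Nat.add_sub_cancel]
  simp only [map_sub, map_natCast, map_one, map_ofNat]
  ring
end

section
/- For all natural numbers n ≥ 15, the polynomial f(x) = x^4 − (n+3)x^2 − 8x + 4n − 24 satisfies f(−√(n−1)) > 0, f(−2) < 0, f(0) > 0, f(2) < 0, and f(√(n+3)) > 0. -/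
open Polynomial MeasureTheory

/-!
Wherever `x² = c` the quartic becomes linear in `x`: `f(x) = c (c - n - 3) - 8x + 4n - 24`.
Hence `f(-√(n-1)) = 8√(n-1) - 20` and `f(√(n+3)) = 4n - 24 - 8√(n+3)`, and the signs reduce to
`25 < 4(n-1)` and `4(n+3) < (n-6)²`; the latter is where `n ≥ 15` is needed.
-/

def quartic (ν x : ℝ) : ℝ := x ^ 4 - (ν + 3) * x ^ 2 - 8 * x + (4 * ν - 24)

section Quartic

variable {ν : ℝ}

theorem quartic_of_sq_eq {x c : ℝ} (hx : x ^ 2 = c) :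
    quartic ν x = c * (c - ν - 3) - 8 * x + (4 * ν - 24) := by
  rw [quartic, ← hx]; ring

theorem quartic_neg_sqrt_sub_one (h : 1 ≤ ν) :
    quartic ν (-√(ν - 1)) = 8 * √(ν - 1) - 20 := by
  rw [quartic_of_sq_eq (c := ν - 1) (by rw [neg_sq, Real.sq_sqrt (by linarith)])]; ring

theorem quartic_sqrt_add_three (h : -3 ≤ ν) :
    quartic ν (√(ν + 3)) = 4 * ν - 24 - 8 * √(ν + 3) := by
  rw [quartic_of_sq_eq (Real.sq_sqrt (by linarith))]; ring

theorem quartic_neg_sqrt_sub_one_pos (h : 29 / 4 < ν) : 0 < quartic ν (-√(ν - 1)) := by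
  have : 5 / 2 < √(ν - 1) := (Real.lt_sqrt (by norm_num)).2 (by linarith)
  rw [quartic_neg_sqrt_sub_one (by linarith)]; linarith

theorem quartic_sqrt_add_three_pos (h : 15 ≤ ν) : 0 < quartic ν (√(ν + 3)) := by
  have : √(ν + 3) < (ν - 6) / 2 := (Real.sqrt_lt' (by linarith)).2 (by nlinarith)
  rw [quartic_sqrt_add_three (by linarith)]; linarith

theorem quartic_neg_two : quartic ν (-2) = -4 := by rw [quartic]; ring

theorem quartic_zero : quartic ν 0 = 4 * ν - 24 := by rw [quartic]; ring

theorem quartic_two : quartic ν 2 = -36 := by rw [quartic]; ring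

end Quartic

/-- Sign pattern of `f(x) = x^4 - (n+3)x^2 - 8x + 4n - 24` for `n ≥ 15`. -/
theorem quartic_sign_pattern (n : ℕ) (hn : 15 ≤ n)
    (f : ℝ → ℝ) (hf : ∀ x, f x = x ^ 4 - ((n : ℝ) + 3) * x ^ 2 - 8 * x + (4 * (n : ℝ) - 24)) :
    f (-(Real.sqrt ((n : ℝ) - 1))) > 0 ∧ f (-2) < 0 ∧ f 0 > 0 ∧ f 2 < 0 ∧
      f (Real.sqrt ((n : ℝ) + 3)) > 0 := by
  have hν : (15 : ℝ) ≤ n := by exact_mod_cast hn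
  obtain rfl : f = quartic n := funext hf
  refine ⟨quartic_neg_sqrt_sub_one_pos (by linarith), ?_, ?_, ?_, quartic_sqrt_add_three_pos hν⟩
  · rw [quartic_neg_two]; norm_num
  · rw [quartic_zero]; linarith
  · rw [quartic_two]; norm_num
end

section
/- For all n ≥ 6, the Coulson-type integral inequality holds: (1/(2π)) ∫_{−∞}^{∞} x^{−2} ln((1+(n+2)x^2+(3n−15)x^4)^2 + 36x^6) dx > (1/(2π)) ∫_{−∞}^{∞} x^{−2} ln((1+n x^2+(n−3)x^4)^2 + 4x^6) dx. -/
open Polynomial MeasureTheory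

/-!
Both integrals are `∫ x⁻² log P(x)` with `P(x) = (1 + a x² + b x⁴)² + c x⁶` and nonnegative
coefficients. For `n ≥ 6` the coefficients `(n + 2, 3n - 15, 36)` dominate `(n, n - 3, 4)` with
`n + 2 > n`, so the integrands are strictly ordered off `x = 0`, and the integrals are too once they
exist. Integrability comes from `log P ≤ 4 (1 + a + b + c) log (1 + x²)` (Bernoulli) together with
`(1 + t)^(3/4) log (1 + t) ≤ 4 t`, which makes the integrand `O((1 + x²)^(-3/4))`.
-/

open Real

lemma integral_lt_integral_of_ae_lt {α : Type*} [MeasurableSpace α] {μ : Measure α} [NeZero μ]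
    {f g : α → ℝ} (hf : Integrable f μ) (hg : Integrable g μ) (hfg : ∀ᵐ x ∂μ, f x < g x) :
    ∫ x, f x ∂μ < ∫ x, g x ∂μ := by
  rw [← sub_pos, ← integral_sub hg hf,
    integral_pos_iff_support_of_nonneg_ae (hfg.mono fun x hx => (sub_pos.2 hx).le) (hg.sub hf),
    pos_iff_ne_zero, Ne, measure_eq_zero_iff_ae_notMem]
  intro h
  refine NeZero.ne μ (ae_eq_bot.1 (Filter.eventually_false_iff_eq_bot.1 ?_))
  filter_upwards [h, hfg] with x hx hlt
  exact hx (sub_ne_zero.2 hlt.ne')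

lemma rpow_three_quarters_mul_log_one_add_le {t : ℝ} (ht : 0 ≤ t) :
    (1 + t) ^ (3 / 4 : ℝ) * log (1 + t) ≤ 4 * t := by
  set u := (1 + t) ^ (1 / 4 : ℝ)
  have hu : 1 ≤ u := one_le_rpow (by linarith) (by norm_num)
  have hu4 : u ^ 4 = 1 + t := by
    rw [← rpow_natCast, ← rpow_mul (by linarith)]; norm_num
  have hu3 : (1 + t) ^ (3 / 4 : ℝ) = u ^ 3 := by
    rw [← rpow_natCast, ← rpow_mul (by linarith)]; norm_num
  have hlog : log (1 + t) ≤ 4 * (u - 1) := by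
    rw [← hu4, log_pow]
    have := log_le_sub_one_of_pos (by linarith : 0 < u)
    push_cast; linarith
  calc (1 + t) ^ (3 / 4 : ℝ) * log (1 + t) ≤ u ^ 3 * (4 * (u - 1)) := by
        rw [hu3]; exact mul_le_mul_of_nonneg_left hlog (by positivity)
    _ ≤ 4 * t := by nlinarith [one_le_pow₀ (n := 3) hu]

lemma integrable_inv_sq_mul_log_one_add_sq :
    Integrable fun x : ℝ => 1 / x ^ 2 * log (1 + x ^ 2) := by
  have hdom := integrable_rpow_neg_one_add_norm_sq (E := ℝ) (μ := volume) (r := 3 / 2) (by norm_num)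
  refine (hdom.const_mul 4).mono' (by fun_prop) (.of_forall fun x => ?_)
  rcases eq_or_ne x 0 with rfl | hx
  · simp
  have hlog : 0 ≤ log (1 + x ^ 2) := log_nonneg (by nlinarith)
  have hpow : 0 < (1 + x ^ 2) ^ (3 / 4 : ℝ) := by positivity
  rw [Real.norm_eq_abs, abs_of_nonneg (by positivity), Real.norm_eq_abs, sq_abs,
    show -(3 / 2 : ℝ) / 2 = -(3 / 4) by norm_num, rpow_neg (by positivity), one_div_mul_eq_div,
    ← div_eq_mul_inv, div_le_div_iff₀ (by positivity) hpow]
  linarith [rpow_three_quarters_mul_log_one_add_le (sq_nonneg x)]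

def coulsonPoly (a b c x : ℝ) : ℝ := (1 + a * x ^ 2 + b * x ^ 4) ^ 2 + c * x ^ 6

section CoulsonPoly

variable {a b c : ℝ}

lemma one_le_coulsonPoly (ha : 0 ≤ a) (hb : 0 ≤ b) (hc : 0 ≤ c) (x : ℝ) :
    1 ≤ coulsonPoly a b c x := by
  have : 1 ≤ 1 + a * x ^ 2 + b * x ^ 4 := by
    nlinarith [mul_nonneg ha (sq_nonneg x), mul_nonneg hb (by positivity : (0 : ℝ) ≤ x ^ 4)]
  unfold coulsonPoly
  nlinarith [one_le_pow₀ (n := 2) this, mul_nonneg hc (by positivity : (0 : ℝ) ≤ x ^ 6)]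

lemma coulsonPoly_le (ha : 0 ≤ a) (hb : 0 ≤ b) (hc : 0 ≤ c) (x : ℝ) :
    coulsonPoly a b c x ≤ (1 + (1 + a + b + c) * x ^ 2) ^ 4 := by
  set M := 1 + a + b + c
  have hM : 1 ≤ M := by linarith
  have ht : 0 ≤ x ^ 2 := sq_nonneg x
  -- Dominate coefficientwise by `(1 + M t + M^2 t^2)^2 + M^3 t^3`, which is `≤ (1 + M t)^4`.
  have hinner : 1 + a * x ^ 2 + b * x ^ 4 ≤ 1 + M * x ^ 2 + M ^ 2 * (x ^ 2) ^ 2 := by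
    have : b ≤ M ^ 2 := by nlinarith
    nlinarith [mul_le_mul_of_nonneg_right this (sq_nonneg (x ^ 2))]
  have hcM : c * x ^ 6 ≤ M ^ 3 * (x ^ 2) ^ 3 := by
    have : c ≤ M ^ 3 := by nlinarith [one_le_pow₀ (n := 2) hM]
    nlinarith [mul_le_mul_of_nonneg_right this (pow_nonneg ht 3)]
  have h0 : 0 ≤ 1 + a * x ^ 2 + b * x ^ 4 := by positivity
  unfold coulsonPoly
  nlinarith [pow_le_pow_left₀ h0 hinner 2,
    mul_nonneg (pow_nonneg (by positivity : 0 ≤ M * x ^ 2) 2) (by positivity : 0 ≤ 3 + M * x ^ 2)]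

lemma log_coulsonPoly_le (ha : 0 ≤ a) (hb : 0 ≤ b) (hc : 0 ≤ c) (x : ℝ) :
    log (coulsonPoly a b c x) ≤ 4 * (1 + a + b + c) * log (1 + x ^ 2) := by
  have hBernoulli : 1 + (1 + a + b + c) * x ^ 2 ≤ (1 + x ^ 2) ^ (1 + a + b + c) :=
    one_add_mul_self_le_rpow_one_add (by nlinarith [sq_nonneg x]) (by linarith)
  calc log (coulsonPoly a b c x)
      ≤ log ((1 + (1 + a + b + c) * x ^ 2) ^ 4) :=
        log_le_log (by linarith [one_le_coulsonPoly ha hb hc x]) (coulsonPoly_le ha hb hc x)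
    _ = 4 * log (1 + (1 + a + b + c) * x ^ 2) := by rw [log_pow]; norm_num
    _ ≤ 4 * log ((1 + x ^ 2) ^ (1 + a + b + c)) := by gcongr
    _ = 4 * (1 + a + b + c) * log (1 + x ^ 2) := by rw [log_rpow (by positivity)]; ring

lemma coulsonPoly_lt_coulsonPoly {a' b' c' x : ℝ} (ha : 0 ≤ a) (hb : 0 ≤ b) (haa' : a < a')
    (hbb' : b ≤ b') (hcc' : c ≤ c') (hx : x ≠ 0) :
    coulsonPoly a b c x < coulsonPoly a' b' c' x := by
  have hx2 : 0 < x ^ 2 := by positivity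
  have hx4 : 0 ≤ x ^ 4 := by positivity
  have hinner : 1 + a * x ^ 2 + b * x ^ 4 < 1 + a' * x ^ 2 + b' * x ^ 4 := by
    nlinarith [mul_lt_mul_of_pos_right haa' hx2, mul_le_mul_of_nonneg_right hbb' hx4]
  have := pow_lt_pow_left₀ hinner (by positivity) two_ne_zero
  have := mul_le_mul_of_nonneg_right hcc' (by positivity : 0 ≤ x ^ 6)
  unfold coulsonPoly
  linarith

end CoulsonPoly

noncomputable def coulsonIntegrand (a b c x : ℝ) : ℝ := 1 / x ^ 2 * log (coulsonPoly a b c x)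

section CoulsonIntegrand

variable {a b c : ℝ}

lemma coulsonIntegrand_nonneg (ha : 0 ≤ a) (hb : 0 ≤ b) (hc : 0 ≤ c) (x : ℝ) :
    0 ≤ coulsonIntegrand a b c x :=
  mul_nonneg (by positivity) (log_nonneg (one_le_coulsonPoly ha hb hc x))

lemma integrable_coulsonIntegrand (ha : 0 ≤ a) (hb : 0 ≤ b) (hc : 0 ≤ c) :
    Integrable (coulsonIntegrand a b c) := by
  refine (integrable_inv_sq_mul_log_one_add_sq.const_mul (4 * (1 + a + b + c))).mono'
    (by unfold coulsonIntegrand coulsonPoly; fun_prop) (.of_forall fun x => ?_)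
  rw [Real.norm_eq_abs, abs_of_nonneg (coulsonIntegrand_nonneg ha hb hc x), coulsonIntegrand,
    mul_left_comm]
  gcongr
  exact log_coulsonPoly_le ha hb hc x

lemma coulsonIntegrand_lt_coulsonIntegrand {a' b' c' x : ℝ} (ha : 0 ≤ a) (hb : 0 ≤ b)
    (hc : 0 ≤ c) (haa' : a < a') (hbb' : b ≤ b') (hcc' : c ≤ c') (hx : x ≠ 0) :
    coulsonIntegrand a b c x < coulsonIntegrand a' b' c' x :=
  mul_lt_mul_of_pos_left
    (log_lt_log (by linarith [one_le_coulsonPoly ha hb hc x])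
      (coulsonPoly_lt_coulsonPoly ha hb haa' hbb' hcc' hx))
    (by positivity)

lemma integral_coulsonIntegrand_lt {a' b' c' : ℝ} (ha : 0 ≤ a) (hb : 0 ≤ b) (hc : 0 ≤ c)
    (haa' : a < a') (hbb' : b ≤ b') (hcc' : c ≤ c') :
    ∫ x, coulsonIntegrand a b c x < ∫ x, coulsonIntegrand a' b' c' x :=
  integral_lt_integral_of_ae_lt (integrable_coulsonIntegrand ha hb hc)
    (integrable_coulsonIntegrand (ha.trans haa'.le) (hb.trans hbb') (hc.trans hcc'))
    ((Measure.ae_ne volume 0).mono fun _ hx =>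
      coulsonIntegrand_lt_coulsonIntegrand ha hb hc haa' hbb' hcc' hx)

end CoulsonIntegrand

/-- Coulson-type integral inequality comparing `E(S_{n,n+2})` and `E(S_{n,n})` for `n ≥ 6`. -/
theorem coulson_integral_ineq (n : ℕ) (hn : 6 ≤ n) :
    (1 / (2 * Real.pi)) * ∫ x : ℝ, (1 / x ^ 2) *
        Real.log ((1 + ((n : ℝ) + 2) * x ^ 2 + (3 * (n : ℝ) - 15) * x ^ 4) ^ 2 + 36 * x ^ 6) >
      (1 / (2 * Real.pi)) * ∫ x : ℝ, (1 / x ^ 2) *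
        Real.log ((1 + (n : ℝ) * x ^ 2 + ((n : ℝ) - 3) * x ^ 4) ^ 2 + 4 * x ^ 6) := by
  have hn' : (6 : ℝ) ≤ n := by exact_mod_cast hn
  exact mul_lt_mul_of_pos_left
    (integral_coulsonIntegrand_lt (by linarith) (by linarith) (by norm_num) (by linarith)
      (by linarith) (by norm_num))
    (by positivity)
end

section
/- For all real x and all n ≥ 6: (1+(n+2)x^2+(3n−15)x^4)^2 + 36x^6 ≥ (1+n x^2+(n−3)x^4)^2 + 4x^6, with strict inequality whenever x ≠ 0. -/
/-!
Write `t = x ^ 2` and let `A`, `B` be the two quartics being squared. Then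
`A - B = 2t (1 + (n - 6) t)`, so the difference of the two sides is
`2t (1 + (n - 6) t) (A + B) + 32 t ^ 3`; for `n ≥ 6` every factor is nonnegative, and the last
term is positive as soon as `t > 0`.
-/

open Polynomial MeasureTheory

lemma coulson_integrand_sub_eq (m t : ℝ) :
    (1 + (m + 2) * t + (3 * m - 15) * t ^ 2) ^ 2 + 36 * t ^ 3 -
        ((1 + m * t + (m - 3) * t ^ 2) ^ 2 + 4 * t ^ 3) =
      2 * t * (1 + (m - 6) * t) * (2 + (2 * m + 2) * t + (4 * m - 18) * t ^ 2) + 32 * t ^ 3 := by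
  ring

lemma coulson_integrand_le {m t : ℝ} (hm : 6 ≤ m) (ht : 0 ≤ t) :
    (1 + m * t + (m - 3) * t ^ 2) ^ 2 + 4 * t ^ 3 ≤
      (1 + (m + 2) * t + (3 * m - 15) * t ^ 2) ^ 2 + 36 * t ^ 3 := by
  have hdiff : 0 ≤ 1 + (m - 6) * t := by nlinarith
  have hsum : 0 ≤ 2 + (2 * m + 2) * t + (4 * m - 18) * t ^ 2 := by nlinarith [sq_nonneg t]
  rw [← sub_nonneg, coulson_integrand_sub_eq]
  positivity

lemma coulson_integrand_lt {m t : ℝ} (hm : 6 ≤ m) (ht : 0 < t) :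
    (1 + m * t + (m - 3) * t ^ 2) ^ 2 + 4 * t ^ 3 <
      (1 + (m + 2) * t + (3 * m - 15) * t ^ 2) ^ 2 + 36 * t ^ 3 := by
  have hdiff : 0 < 1 + (m - 6) * t := by nlinarith
  have hsum : 0 < 2 + (2 * m + 2) * t + (4 * m - 18) * t ^ 2 := by nlinarith [sq_nonneg t]
  rw [← sub_pos, coulson_integrand_sub_eq]
  positivity

/-- Pointwise inequality between the Coulson integrands of `E(S_{n,n+2})` and `E(S_{n,n})`. -/
theorem pointwise_integrand_ineq (n : ℕ) (hn : 6 ≤ n) (x : ℝ) :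
    (1 + ((n : ℝ) + 2) * x ^ 2 + (3 * (n : ℝ) - 15) * x ^ 4) ^ 2 + 36 * x ^ 6 ≥
      (1 + (n : ℝ) * x ^ 2 + ((n : ℝ) - 3) * x ^ 4) ^ 2 + 4 * x ^ 6 ∧
    (x ≠ 0 →
      (1 + ((n : ℝ) + 2) * x ^ 2 + (3 * (n : ℝ) - 15) * x ^ 4) ^ 2 + 36 * x ^ 6 >
        (1 + (n : ℝ) * x ^ 2 + ((n : ℝ) - 3) * x ^ 4) ^ 2 + 4 * x ^ 6) := by
  have hm : (6 : ℝ) ≤ n := by exact_mod_cast hn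
  refine ⟨?_, fun hx => ?_⟩
  · simpa only [← pow_mul, Nat.reduceMul] using coulson_integrand_le hm (sq_nonneg x)
  · simpa only [← pow_mul, Nat.reduceMul] using coulson_integrand_lt hm (even_two.pow_pos hx)
end
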